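/- arXiv:2107.00780 — 2 statements merged into one kernel-verified Lean document; each statement's English description precedes it below -/
import Mathlib

section
/- The bilinear form κ̃ = κ|_{g_0} + (1/2)(κ°_g|_{g_0} − κ°_{g_0}) on g_0 ≅ gl_n^{⊕l} ⊂ gl_N satisfies κ̃(E^{[s]}_{i,j}, E^{[t]}_{p,q}) = δ_{st}( δ_{iq}δ_{jp}(k + (l−1)n) + δ_{ij}δ_{pq} ). -/
/-!
Both Killing forms are trace forms. On `gl_m`, `ad X ∘ ad Y` is a combination of the four
sandwich maps `Z ↦ A * Z * B` with `(A, B) = (XY, 1), (X, Y), (Y, X), (1, YX)`, and such a map has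
trace `tr A * tr B`; hence `κ°(X, Y) = 2m tr(XY) - 2 tr X tr Y`. On the product `g₀ = gl_n^l` the
adjoint action preserves the factors, so `κ°_{g₀}` is the Killing form of `gl_n` on each block and
vanishes across blocks. Since `E^{[s]}_{i,j}` is a matrix unit of `gl_{ln}`, every trace is a
product of Kronecker deltas: within a block the two Killing forms differ by `(2ln - 2n) tr(XY)`,
which produces the shift `(l - 1)n`, and across blocks the `tr X tr Y` term of `κ°_g` cancels
the one of `κ`.
-/

open Matrix

attribute [local instance 100] LieRing.ofAssociativeRing

/-- The index embedding (s, i) ↦ (s−1)n + i (0-indexed: s·n + i). -/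
def emb {l n : ℕ} (s : Fin l) (i : Fin n) : Fin (l * n) :=
  ⟨s.val * n + i.val, by
    have h1 : s.val + 1 ≤ l := s.2
    have h2 : i.val < n := i.2
    calc s.val * n + i.val < s.val * n + n := by omega
      _ = (s.val + 1) * n := by ring
      _ ≤ l * n := Nat.mul_le_mul_right n h1⟩

/-- The block-diagonal embedding of gl_n^{⊕l} into gl_{ln}, identifying the degree-zero
component g₀, with Pi.single s (E_{i,j}) ↦ E^{[s]}_{i,j} = E_{(s-1)n+i,(s-1)n+j}. -/
noncomputable def blockDiag (l n : ℕ) (X : Fin l → Matrix (Fin n) (Fin n) ℂ) :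
    Matrix (Fin (l * n)) (Fin (l * n)) ℂ :=
  ∑ s : Fin l, ∑ i : Fin n, ∑ j : Fin n, X s i j • Matrix.single (emb s i) (emb s j) 1

/-- The bilinear form κ on gl_N : κ(X,Y) = k·tr(XY) + tr(X)·tr(Y), which is the form
with κ(E_{i,j},E_{p,q}) = δ_{iq}δ_{jp}k + δ_{ij}δ_{pq}. -/
noncomputable def kappaForm (N : ℕ) (k : ℂ) (X Y : Matrix (Fin N) (Fin N) ℂ) : ℂ :=
  k * (X * Y).trace + X.trace * Y.trace

lemma Matrix.trace_single_one {m R : Type*} [Fintype m] [DecidableEq m] [Semiring R] (a b : m) :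
    (single a b (1 : R)).trace = if a = b then 1 else 0 := by
  split_ifs with h
  · rw [h, trace_single_eq_same]
  · exact trace_single_eq_of_ne _ _ _ h

lemma Matrix.trace_single_one_mul_single_one {m R : Type*} [Fintype m] [DecidableEq m] [Semiring R]
    (a b c d : m) :
    (single a b (1 : R) * single c d 1).trace =
      (if b = c then 1 else 0) * (if a = d then 1 else 0) := by
  simp only [trace_single_mul, single_apply, smul_eq_mul, ite_and, eq_comm]
  split_ifs <;> simp

section MatrixKilling

variable {R ι : Type*} [CommRing R] [Fintype ι]

lemma Matrix.stdBasis_repr_apply (M : Matrix ι ι R) (p : ι × ι) :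
    (Matrix.stdBasis R ι ι).repr M p = M p.1 p.2 := by
  simp [Matrix.stdBasis, Pi.basis_repr]

variable [DecidableEq ι]

lemma Matrix.trace_mulLeftRight (A B : Matrix ι ι R) :
    LinearMap.trace R (Matrix ι ι R) (LinearMap.mulLeftRight R (A, B)) = A.trace * B.trace := by
  rw [LinearMap.trace_eq_matrix_trace R (Matrix.stdBasis R ι ι), Matrix.trace,
    Fintype.sum_prod_type, Matrix.trace, Matrix.trace, Finset.sum_mul_sum]
  refine Finset.sum_congr rfl fun a _ => Finset.sum_congr rfl fun b _ => ?_
  simp [LinearMap.toMatrix_apply, Matrix.stdBasis_repr_apply, Matrix.stdBasis_eq_single,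
    Matrix.mul_apply, Matrix.single_apply, ite_and, ite_mul]

lemma Matrix.ad_comp_ad (X Y : Matrix ι ι R) :
    LieAlgebra.ad R (Matrix ι ι R) X ∘ₗ LieAlgebra.ad R (Matrix ι ι R) Y =
      LinearMap.mulLeftRight R (X * Y, 1) - LinearMap.mulLeftRight R (X, Y)
        - LinearMap.mulLeftRight R (Y, X) + LinearMap.mulLeftRight R (1, Y * X) := by
  ext1 Z
  simp only [LinearMap.comp_apply, LieAlgebra.ad_apply, Ring.lie_def, LinearMap.add_apply,
    LinearMap.sub_apply, LinearMap.mulLeftRight_apply]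
  noncomm_ring

lemma Matrix.killingForm_eq (X Y : Matrix ι ι R) :
    killingForm R (Matrix ι ι R) X Y
      = 2 * Fintype.card ι * (X * Y).trace - 2 * X.trace * Y.trace := by
  rw [killingForm_apply_apply, Matrix.ad_comp_ad]
  simp only [map_add, map_sub, Matrix.trace_mulLeftRight, Matrix.trace_one,
    Matrix.trace_mul_comm Y X]
  ring

end MatrixKilling

section PiKilling

variable {R ι A : Type*} [CommRing R] [DecidableEq ι] [Ring A] [Algebra R A]

lemma LieAlgebra.ad_pi_single_comp_ad_pi_single (s t : ι) (X Y : A) :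
    LieAlgebra.ad R (ι → A) (Pi.single s X) ∘ₗ LieAlgebra.ad R (ι → A) (Pi.single t Y) =
      if s = t then
        LinearMap.single R (fun _ => A) s ∘ₗ (LieAlgebra.ad R A X ∘ₗ LieAlgebra.ad R A Y) ∘ₗ
          LinearMap.proj s
      else 0 := by
  refine LinearMap.ext fun v => funext fun w => ?_
  split_ifs with hst <;> by_cases hw : w = s <;> simp_all [Ring.lie_def, Pi.single_apply]

variable [Fintype ι] [Module.Free R A] [Module.Finite R A]

lemma killingForm_pi_single (s t : ι) (X Y : A) :
    killingForm R (ι → A) (Pi.single s X) (Pi.single t Y) =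
      if s = t then killingForm R A X Y else 0 := by
  rw [killingForm_apply_apply, LieAlgebra.ad_pi_single_comp_ad_pi_single]
  split_ifs
  · rw [LinearMap.trace_comp_comm' _ (LinearMap.single R (fun _ => A) s), LinearMap.comp_assoc,
      LinearMap.proj_comp_single_same, LinearMap.comp_id, killingForm_apply_apply]
  · exact map_zero _

end PiKilling

lemma emb_eq_finProdFinEquiv {l n : ℕ} (s : Fin l) (i : Fin n) :
    emb s i = finProdFinEquiv (s, i) :=
  Fin.ext (by simp [emb, finProdFinEquiv, Nat.add_comm, Nat.mul_comm])

lemma emb_inj {l n : ℕ} {s t : Fin l} {i p : Fin n} : emb s i = emb t p ↔ s = t ∧ i = p := by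
  simp [emb_eq_finProdFinEquiv]

lemma blockDiag_single {l n : ℕ} (s : Fin l) (i j : Fin n) (c : ℂ) :
    blockDiag l n (Pi.single s (Matrix.single i j c)) = Matrix.single (emb s i) (emb s j) c := by
  rw [_root_.blockDiag, Finset.sum_eq_single s (fun u _ hu => by simp [Pi.single_eq_of_ne hu])
    (by simp), Pi.single_eq_same]
  simp [Matrix.single_apply, ite_and, ite_smul]

theorem stmt4_general (l n : ℕ) (k : ℂ) :
    ∀ (s t : Fin l) (i j p q : Fin n),
      kappaForm (l * n) k
          (blockDiag l n (Pi.single s (Matrix.single i j 1)))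
          (blockDiag l n (Pi.single t (Matrix.single p q 1)))
        + (1 / 2) *
          (killingForm ℂ (Matrix (Fin (l * n)) (Fin (l * n)) ℂ)
              (blockDiag l n (Pi.single s (Matrix.single i j 1)))
              (blockDiag l n (Pi.single t (Matrix.single p q 1)))
            - killingForm ℂ (Fin l → Matrix (Fin n) (Fin n) ℂ)
                (Pi.single s (Matrix.single i j 1))
                (Pi.single t (Matrix.single p q 1))) =
      if s = t then
        (if i = q then 1 else 0) * (if j = p then 1 else 0) * (k + ((l : ℂ) - 1) * n) +
          (if i = j then (1 : ℂ) else 0) * (if p = q then 1 else 0)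
      else 0 := by
  intro s t i j p q
  simp only [blockDiag_single, kappaForm, killingForm_pi_single, Matrix.killingForm_eq,
    Matrix.trace_single_one_mul_single_one, Matrix.trace_single_one, emb_inj, Fintype.card_fin]
  push_cast
  by_cases hst : s = t
  · subst hst
    simp only [true_and, if_true]
    ring
  · simp only [hst, false_and, if_false]
    ring

/-- The form κ̃ = κ|_{g₀} + (1/2)(κ°_g|_{g₀} − κ°_{g₀}) on
g₀ ≅ gl_n^{⊕l} ⊂ gl_{ln} satisfies
κ̃(E^{[s]}_{i,j}, E^{[t]}_{p,q}) = δ_{st}( δ_{iq}δ_{jp}(k + (l−1)n) + δ_{ij}δ_{pq} ),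
where κ°_g, κ°_{g₀} are the Killing forms of gl_{ln} and of g₀ ≅ gl_n^{⊕l}. -/
theorem stmt4 (l n : ℕ) (hl : 1 ≤ l) (hn : 1 ≤ n) (k : ℂ) :
    ∀ (s t : Fin l) (i j p q : Fin n),
      kappaForm (l * n) k
          (blockDiag l n (Pi.single s (Matrix.single i j 1)))
          (blockDiag l n (Pi.single t (Matrix.single p q 1)))
        + (1 / 2) *
          (killingForm ℂ (Matrix (Fin (l * n)) (Fin (l * n)) ℂ)
              (blockDiag l n (Pi.single s (Matrix.single i j 1)))
              (blockDiag l n (Pi.single t (Matrix.single p q 1)))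
            - killingForm ℂ (Fin l → Matrix (Fin n) (Fin n) ℂ)
                (Pi.single s (Matrix.single i j 1))
                (Pi.single t (Matrix.single p q 1))) =
      if s = t then
        (if i = q then 1 else 0) * (if j = p then 1 else 0) * (k + ((l : ℂ) - 1) * n) +
          (if i = j then (1 : ℂ) else 0) * (if p = q then 1 else 0)
      else 0 :=
  stmt4_general l n k
end

section
/- For i < j, with A_i = Σ_{m≥0}Σ_{a=1}^{i−1} W_{i,a}(−m)W_{a,i}(m) and A_j defined analogously, one has [A_i, A_j] = Σ_{m,m'≥0, m−m'>0} Σ_{a=1}^{i−1} ( W_{j,a}(−m')W_{i,j}(−m+m')W_{a,i}(m) − W_{i,a}(−m)W_{j,i}(m−m')W_{a,j}(m') ), where W_{i,j}(m) abbreviates W^{(1)}_{i,j}(m). -/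
/-!
For a < i < j, the bracket of W_{i,a}(−m)W_{a,i}(m) with W_{j,b}(−m')W_{b,j}(m') vanishes unless
b = a or b = i. Summing over a gives [F_i(m), F_j(m')] = P(m, m') − P(m, m + m'), where
F_i(m) = Σ_{a<i} W_{i,a}(−m)W_{a,i}(m) and P(m, m') is the cubic sum on the right-hand side, so
the series over m' telescopes to Σ_{m'<m} P(m, m').

Splitting that series needs the summability of m' ↦ W_{j,i}(−m')W_{i,j}(m'). For k ≤ j the
partial sum Σ_{a<k} W_{j,a}(−m)W_{a,j}(m) is summable in m: for k = j it is F_j(m), and for k < j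
it equals F_k(m) − [W_{k,j}(0), [W_{j,k}(0), F_k(m)]]. The product W_{j,i}(−m)W_{i,j}(m) is the
difference of the partial sums for k = i + 1 and k = i.
-/

/-- A_i = Σ_{m≥0} Σ_{a=1}^{i−1} W_{i,a}(−m)W_{a,i}(m). -/
noncomputable def Aop {n : ℕ} {A : Type*} [Ring A] [TopologicalSpace A]
    (W : Fin n → Fin n → ℤ → A) (i : Fin n) : A :=
  ∑' m : ℕ, ∑ a : Fin n,
    if (a : ℕ) < (i : ℕ) then W i a (-(m : ℤ)) * W a i (m : ℤ) else 0

open Finset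

section LieBracket

variable {A : Type*} [Ring A]

theorem lie_mul (x y z : A) : ⁅x, y * z⁆ = ⁅x, y⁆ * z + y * ⁅x, z⁆ := by
  simp only [Ring.lie_def]; noncomm_ring

theorem mul_lie (x y z : A) : ⁅x * y, z⁆ = x * ⁅y, z⁆ + ⁅x, z⁆ * y := by
  simp only [Ring.lie_def]; noncomm_ring

variable [TopologicalSpace A] [IsTopologicalRing A] {ι : Type*} {f : ι → A}

theorem Summable.lie_left (x : A) (hf : Summable f) : Summable fun i => ⁅x, f i⁆ := by
  simpa only [Ring.lie_def] using (hf.mul_left x).sub (hf.mul_right x)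

variable [T2Space A]

theorem lie_tsum (x : A) (hf : Summable f) : ⁅x, ∑' i, f i⁆ = ∑' i, ⁅x, f i⁆ := by
  simp only [Ring.lie_def]
  rw [(hf.mul_left x).tsum_sub (hf.mul_right x), hf.tsum_mul_left, hf.tsum_mul_right]

theorem tsum_lie (x : A) (hf : Summable f) : ⁅∑' i, f i, x⁆ = ∑' i, ⁅f i, x⁆ := by
  simp only [Ring.lie_def]
  rw [(hf.mul_right x).tsum_sub (hf.mul_left x), hf.tsum_mul_left, hf.tsum_mul_right]

end LieBracket

theorem Summable.tsum_sub_nat_add {G : Type*} [AddCommGroup G] [TopologicalSpace G]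
    [IsTopologicalAddGroup G] [T2Space G] {f : ℕ → G} (hf : Summable f) (k : ℕ) :
    ∑' i, (f i - f (i + k)) = ∑ i ∈ range k, f i := by
  rw [hf.tsum_sub ((summable_nat_add_iff k).mpr hf), ← hf.sum_add_tsum_nat_add k,
    add_sub_cancel_right]

section AffineGl

attribute [local instance 100] LieRing.ofAssociativeRing

variable {ι A : Type*} [DecidableEq ι] [Ring A] [Algebra ℂ A]

def AffineGlRelations (l : ℕ) (α : ℂ) (W : ι → ι → ℤ → A) : Prop :=
  ∀ (i j p q : ι) (m m' : ℤ),
    ⁅W i j m, W p q m'⁆ =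
      (if p = j then W i q (m + m') else 0) - (if i = q then W p j (m + m') else 0) +
        ((m : ℂ) * (if m + m' = 0 then 1 else 0) * (l : ℂ) *
          ((if i = q then 1 else 0) * (if j = p then 1 else 0) * α +
            (if i = j then 1 else 0) * (if p = q then 1 else 0))) • (1 : A)

def pairTerm (W : ι → ι → ℤ → A) (i a : ι) (m : ℤ) : A := W i a (-m) * W a i m

def pairSum (W : ι → ι → ℤ → A) (s : Finset ι) (i : ι) (m : ℤ) : A :=
  ∑ a ∈ s, pairTerm W i a m

def cubicSum (W : ι → ι → ℤ → A) (s : Finset ι) (i j : ι) (m m' : ℤ) : A :=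
  ∑ a ∈ s, (W j a (-m') * W i j (-m + m') * W a i m - W i a (-m) * W j i (m - m') * W a j m')

namespace AffineGlRelations

variable {l : ℕ} {α : ℂ} {W : ι → ι → ℤ → A} {i j p q a b : ι}

theorem lie_eq_zero_of_ne (hW : AffineGlRelations l α W) (hij : i ≠ j) (hpj : p ≠ j)
    (hiq : i ≠ q) (m m' : ℤ) : ⁅W i j m, W p q m'⁆ = 0 := by
  rw [hW]; simp [hij, hpj, hiq]

theorem lie_comp (hW : AffineGlRelations l α W) (hiq : i ≠ q) (m m' : ℤ) :
    ⁅W i j m, W j q m'⁆ = W i q (m + m') := by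
  rw [hW]
  by_cases hij : i = j
  · subst hij; simp [hiq]
  · simp [hiq, hij]

theorem lie_comp_rev (hW : AffineGlRelations l α W) (hpj : p ≠ j) (m m' : ℤ) :
    ⁅W i j m, W p i m'⁆ = -W p j (m + m') := by
  rw [← lie_skew, hW.lie_comp hpj, add_comm]

theorem lie_pairTerm_pairTerm_of_ne (hW : AffineGlRelations l α W) (hai : a ≠ i) (haj : a ≠ j)
    (hij : i ≠ j) (hba : b ≠ a) (hbi : b ≠ i) (m m' : ℤ) :
    ⁅pairTerm W i a m, pairTerm W j b m'⁆ = 0 := by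
  simp only [pairTerm, mul_lie, lie_mul, hW.lie_eq_zero_of_ne hai.symm haj.symm hbi.symm,
    hW.lie_eq_zero_of_ne hai.symm hba hij, hW.lie_eq_zero_of_ne hai hij.symm hba.symm,
    hW.lie_eq_zero_of_ne hai hbi haj]
  simp

theorem lie_pairTerm_pairTerm_same (hW : AffineGlRelations l α W) (hai : a ≠ i) (haj : a ≠ j)
    (hij : i ≠ j) (m m' : ℤ) :
    ⁅pairTerm W i a m, pairTerm W j a m'⁆ =
      W j a (-m') * W i j (-m + m') * W a i m - W i a (-m) * W j i (m - m') * W a j m' := by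
  rw [pairTerm, pairTerm, mul_lie, lie_mul, lie_mul,
    hW.lie_eq_zero_of_ne hai.symm haj.symm hai.symm,
    hW.lie_comp hij, hW.lie_comp_rev hij.symm, hW.lie_eq_zero_of_ne hai hai haj, sub_eq_add_neg]
  noncomm_ring

theorem lie_pairTerm_pairTerm_swap (hW : AffineGlRelations l α W) (hai : a ≠ i) (haj : a ≠ j)
    (hij : i ≠ j) (m m' : ℤ) :
    ⁅pairTerm W i a m, pairTerm W j i m'⁆ =
      W i a (-m) * W j i (-m') * W a j (m + m') - W j a (-m + -m') * W i j m' * W a i m := by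
  -- Expanding as x⁅y, zw⁆ + ⁅x, zw⁆y produces the right-hand side's word order; the other
  -- order of expansion would need one more commutation relation to match it.
  rw [pairTerm, pairTerm, mul_lie, lie_mul, lie_mul, hW.lie_eq_zero_of_ne hai hij.symm hai,
    hW.lie_comp haj, hW.lie_comp_rev haj.symm, hW.lie_eq_zero_of_ne hai.symm hai.symm hij]
  noncomm_ring

theorem lie_pairSum_pairTerm (hW : AffineGlRelations l α W) {s : Finset ι} (hi : i ∉ s)
    (hj : j ∉ s) (hij : i ≠ j) (m m' : ℤ) :
    ⁅pairSum W s i m, pairTerm W j i m'⁆ = -cubicSum W s i j m (m + m') := by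
  rw [pairSum, cubicSum, sum_lie, ← sum_neg_distrib]
  refine sum_congr rfl fun a ha => ?_
  rw [hW.lie_pairTerm_pairTerm_swap (ne_of_mem_of_not_mem ha hi) (ne_of_mem_of_not_mem ha hj) hij,
    neg_sub, neg_add, neg_add_cancel_left, sub_add_cancel_left]

theorem lie_pairSum_pairSum (hW : AffineGlRelations l α W) {s t : Finset ι} (hst : s ⊆ t)
    (hit : i ∈ t) (hi : i ∉ s) (hj : j ∉ s) (hij : i ≠ j) (m m' : ℤ) :
    ⁅pairSum W s i m, pairSum W t j m'⁆ =
      cubicSum W s i j m m' - cubicSum W s i j m (m + m') := by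
  have hsplit : ∀ a ∈ s, ⁅pairTerm W i a m, pairSum W t j m'⁆ =
      ⁅pairTerm W i a m, pairTerm W j a m'⁆ + ⁅pairTerm W i a m, pairTerm W j i m'⁆ := by
    intro a ha
    have hai : a ≠ i := ne_of_mem_of_not_mem ha hi
    rw [pairSum, lie_sum,
      ← sum_pair (f := fun b => ⁅pairTerm W i a m, pairTerm W j b m'⁆) hai]
    refine (sum_subset (insert_subset (hst ha) (singleton_subset_iff.2 hit))
      fun b _ hb => ?_).symm
    simp only [mem_insert, mem_singleton, not_or] at hb
    exact hW.lie_pairTerm_pairTerm_of_ne hai (ne_of_mem_of_not_mem ha hj) hij hb.1 hb.2 m m'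
  calc ⁅pairSum W s i m, pairSum W t j m'⁆
      = ∑ a ∈ s, (⁅pairTerm W i a m, pairTerm W j a m'⁆ +
          ⁅pairTerm W i a m, pairTerm W j i m'⁆) :=
        (sum_lie s (fun a => pairTerm W i a m) _).trans (sum_congr rfl hsplit)
    _ = cubicSum W s i j m m' + ⁅pairSum W s i m, pairTerm W j i m'⁆ := by
        rw [sum_add_distrib, pairSum, sum_lie, cubicSum]
        congr 1
        exact sum_congr rfl fun a ha => hW.lie_pairTerm_pairTerm_same (ne_of_mem_of_not_mem ha hi)
          (ne_of_mem_of_not_mem ha hj) hij m m'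
    _ = _ := by rw [hW.lie_pairSum_pairTerm hi hj hij, sub_eq_add_neg]

theorem pairSum_eq_sub_lie_lie (hW : AffineGlRelations l α W) {s : Finset ι} (hbj : b ≠ j)
    (hb : b ∉ s) (hj : j ∉ s) (m : ℤ) :
    pairSum W s j m = pairSum W s b m - ⁅W b j 0, ⁅W j b 0, pairSum W s b m⁆⁆ := by
  have hterm : ∀ c ∈ s,
      ⁅W b j 0, ⁅W j b 0, pairTerm W b c m⁆⁆ = pairTerm W b c m - pairTerm W j c m := by
    intro c hc
    have hcb : c ≠ b := ne_of_mem_of_not_mem hc hb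
    have hcj : c ≠ j := ne_of_mem_of_not_mem hc hj
    rw [pairTerm, lie_mul, hW.lie_comp hcj.symm, hW.lie_eq_zero_of_ne hbj.symm hcb hbj.symm,
      mul_zero, add_zero, lie_mul, hW.lie_comp hcb.symm, hW.lie_comp_rev hcj, zero_add, zero_add,
      zero_add, pairTerm, mul_neg, sub_eq_add_neg]
  simp only [pairSum, lie_sum]
  rw [sum_congr rfl hterm, sum_sub_distrib, sub_sub_cancel]

variable [TopologicalSpace A] [IsTopologicalRing A]

theorem summable_pairSum_of_ne (hW : AffineGlRelations l α W) {s : Finset ι} (hbj : b ≠ j)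
    (hb : b ∉ s) (hj : j ∉ s) (h : Summable fun m : ℕ => pairSum W s b m) :
    Summable fun m : ℕ => pairSum W s j m :=
  (h.sub ((h.lie_left _).lie_left _)).congr fun m =>
    (hW.pairSum_eq_sub_lie_lie hbj hb hj m).symm

theorem tsum_lie_pairSum [T2Space A] (hW : AffineGlRelations l α W) {s t : Finset ι}
    (hst : s ⊆ t) (hit : i ∈ t) (hi : i ∉ s) (hj : j ∉ s) (hij : i ≠ j)
    (ht : Summable fun m' : ℕ => pairSum W t j m')
    (hji : Summable fun m' : ℕ => pairTerm W j i m') (m : ℕ) :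
    ∑' m' : ℕ, ⁅pairSum W s i m, pairSum W t j m'⁆ =
      ∑ k ∈ range m, cubicSum W s i j m k := by
  have hlie : ∀ k : ℕ, ⁅pairSum W s i m, pairSum W t j k⁆ =
      cubicSum W s i j m k - cubicSum W s i j m ↑(k + m) := by
    intro k
    rw [hW.lie_pairSum_pairSum hst hit hi hj hij, Nat.cast_add, add_comm (k : ℤ)]
  have hc : Summable fun k : ℕ => cubicSum W s i j m k := by
    refine ((ht.lie_left (pairSum W s i m)).sub (hji.lie_left (pairSum W s i m))).congr
      fun k => ?_
    rw [hlie, hW.lie_pairSum_pairTerm hi hj hij, Nat.cast_add, add_comm (k : ℤ), sub_neg_eq_add,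
      sub_add_cancel]
  rw [tsum_congr hlie, hc.tsum_sub_nat_add]

end AffineGlRelations

end AffineGl

section Fin

variable {n l : ℕ} {α : ℂ} {A : Type*} [Ring A] [Algebra ℂ A] [TopologicalSpace A]
  [IsTopologicalRing A] {W : Fin n → Fin n → ℤ → A}

theorem AffineGlRelations.summable_pairSum_below (hW : AffineGlRelations l α W)
    (hsum : ∀ b : Fin n, Summable fun m : ℕ => pairSum W {c | (c : ℕ) < b} b m)
    {j : Fin n} {k : ℕ} (hk : k ≤ j) :
    Summable fun m : ℕ => pairSum W {c | (c : ℕ) < k} j m := by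
  obtain rfl | hk := hk.eq_or_lt
  · exact hsum j
  · exact hW.summable_pairSum_of_ne (Fin.ne_of_val_ne hk.ne) (by simp) (by simpa using hk.le)
      (hsum ⟨k, hk.trans j.isLt⟩)

theorem AffineGlRelations.summable_pairTerm (hW : AffineGlRelations l α W)
    (hsum : ∀ b : Fin n, Summable fun m : ℕ => pairSum W {c | (c : ℕ) < b} b m)
    {i j : Fin n} (hij : i < j) : Summable fun m : ℕ => pairTerm W j i m := by
  have hinsert : ({c | (c : ℕ) < i + 1} : Finset (Fin n)) =
      insert i ({c | (c : ℕ) < i} : Finset (Fin n)) := by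
    ext c
    simp only [mem_filter, mem_univ, true_and, mem_insert, Fin.ext_iff]
    omega
  refine ((hW.summable_pairSum_below hsum (k := i + 1) hij).sub
    (hW.summable_pairSum_below hsum (k := i) hij.le)).congr fun m => ?_
  rw [pairSum, pairSum, hinsert, sum_insert (by simp), add_sub_cancel_right]

end Fin

/-- For i < j,
[A_i, A_j] = Σ_{m,m'≥0, m−m'>0} Σ_{a=1}^{i−1}
 ( W_{j,a}(−m')W_{i,j}(−m+m')W_{a,i}(m) − W_{i,a}(−m)W_{j,i}(m−m')W_{a,j}(m') ),
where W_{i,j}(m) = W^{(1)}_{i,j}(m) satisfy the affine gl_n relation at level l·α. -/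
theorem stmt16 (l n : ℕ) (α : ℂ) (A : Type*) [Ring A] [Algebra ℂ A]
    [TopologicalSpace A] [IsTopologicalRing A] [T2Space A]
    (W : Fin n → Fin n → ℤ → A)
    (hW : ∀ (i j p q : Fin n) (m m' : ℤ),
      ⁅W i j m, W p q m'⁆ =
        (if p = j then W i q (m + m') else 0) - (if i = q then W p j (m + m') else 0) +
          ((m : ℂ) * (if m + m' = 0 then 1 else 0) * (l : ℂ) *
            ((if i = q then 1 else 0) * (if j = p then 1 else 0) * α +
              (if i = j then 1 else 0) * (if p = q then 1 else 0))) • (1 : A))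
    (hsumA : ∀ i : Fin n, Summable (fun m : ℕ => ∑ a : Fin n,
      if (a : ℕ) < (i : ℕ) then W i a (-(m : ℤ)) * W a i (m : ℤ) else 0)) :
    ∀ i j : Fin n, (i : ℕ) < (j : ℕ) →
      ⁅Aop W i, Aop W j⁆ =
        ∑' m : ℕ, ∑' m' : ℕ,
          if m' < m then
            ∑ a : Fin n,
              if (a : ℕ) < (i : ℕ) then
                W j a (-(m' : ℤ)) * W i j (-(m : ℤ) + (m' : ℤ)) * W a i (m : ℤ) -
                  W i a (-(m : ℤ)) * W j i ((m : ℤ) - (m' : ℤ)) * W a j (m' : ℤ)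
              else 0
          else 0 := by
  intro i j hij
  have hW : AffineGlRelations l α W := hW
  have hAop (p : Fin n) : Aop W p = ∑' m : ℕ, pairSum W {c | (c : ℕ) < p} p m :=
    tsum_congr fun m => (sum_filter _ _).symm
  have hsum (p : Fin n) : Summable fun m : ℕ => pairSum W {c | (c : ℕ) < p} p m :=
    (hsumA p).congr fun m => (sum_filter _ _).symm
  have hst : ({c | (c : ℕ) < i} : Finset (Fin n)) ⊆ ({c | (c : ℕ) < j} : Finset (Fin n)) := by
    intro c hc
    simp only [mem_filter, mem_univ, true_and] at hc ⊢
    omega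
  rw [hAop, hAop, tsum_lie _ (hsum i)]
  refine tsum_congr fun m => ?_
  rw [lie_tsum _ (hsum j), hW.tsum_lie_pairSum hst (by simpa using hij) (by simp)
      (by simpa using hij.le) (Fin.ne_of_lt hij) (hsum j) (hW.summable_pairTerm hsum hij),
    tsum_eq_sum (s := range m) fun k hk => if_neg (by simpa using hk)]
  exact sum_congr rfl fun k hk => by rw [if_pos (mem_range.mp hk), cubicSum, sum_filter]
end
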